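/- Let P and Q be probability distributions on a finite set Ω with Q(x) > 0 for all x, and suppose e^{−ε} ≤ P(x)/Q(x) ≤ e^{ε} for all x ∈ Ω, where ε > 0. Then for every α ∈ (1, ∞), D_α(P‖Q) ≤ (1/2)ε²α, where D_α(P‖Q) = (1/(α−1)) log ( Σ_x P(x)^α Q(x)^{1−α} ). -/

import Mathlib

open Real Set Finset

/-!
Writing `r = P / Q`, the sum is the `Q`-mean of `r ^ α`, where `r` takes values in
`[e^{-ε}, e^ε]` and has `Q`-mean `∑ P = 1`. Since `t ↦ t ^ α` is convex, `r ^ α` lies below its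
chord over that interval, so the sum is at most the chord's value at `1`, which simplifies to
`cosh (ε (α - 1/2)) / cosh (ε / 2)`. Because `tanh t ≤ t`, the function `log cosh t - t² / 2`
decreases on `[0, ∞)`, which bounds this ratio by `exp (ε² α (α - 1) / 2)`.
-/

namespace Real

lemma sinh_le_mul_cosh {t : ℝ} (ht : 0 ≤ t) : sinh t ≤ t * cosh t := by
  have hderiv (s : ℝ) : HasDerivAt (fun s => s * cosh s - sinh s) (s * sinh s) s := by
    refine (((hasDerivAt_id' s).mul (hasDerivAt_cosh s)).sub (hasDerivAt_sinh s)).congr_deriv ?_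
    ring
  have hmono : MonotoneOn (fun s => s * cosh s - sinh s) (Ici 0) := by
    refine monotoneOn_of_deriv_nonneg (convex_Ici 0) (by fun_prop)
      (fun s _ => (hderiv s).differentiableAt.differentiableWithinAt) fun s hs => ?_
    rw [interior_Ici] at hs
    rw [(hderiv s).deriv]
    exact mul_nonneg (le_of_lt hs) (sinh_nonneg_iff.mpr (le_of_lt hs))
  simpa using hmono self_mem_Ici ht ht

lemma antitoneOn_log_cosh_sub_sq_div_two :
    AntitoneOn (fun t => log (cosh t) - t ^ 2 / 2) (Ici 0) := by
  have hderiv (t : ℝ) :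
      HasDerivAt (fun t => log (cosh t) - t ^ 2 / 2) (sinh t / cosh t - t) t := by
    refine (((hasDerivAt_cosh t).log (cosh_pos t).ne').sub
      ((hasDerivAt_pow 2 t).div_const 2)).congr_deriv ?_
    ring
  refine antitoneOn_of_deriv_nonpos (convex_Ici 0)
    (fun t _ => (hderiv t).continuousAt.continuousWithinAt)
    (fun t _ => (hderiv t).differentiableAt.differentiableWithinAt) fun t ht => ?_
  rw [interior_Ici] at ht
  rw [(hderiv t).deriv, sub_nonpos, div_le_iff₀ (cosh_pos t)]
  exact sinh_le_mul_cosh (le_of_lt ht)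

lemma cosh_le_cosh_mul_exp {x y : ℝ} (hy : 0 ≤ y) (hyx : y ≤ x) :
    cosh x ≤ cosh y * exp ((x ^ 2 - y ^ 2) / 2) := by
  have h := antitoneOn_log_cosh_sub_sq_div_two hy (hy.trans hyx) hyx
  rw [← exp_log (cosh_pos x), ← exp_log (cosh_pos y), ← exp_add, exp_le_exp]
  linarith

lemma log_le_of_le_exp {x y : ℝ} (hx : 0 ≤ x) (hy : 0 ≤ y) (h : x ≤ exp y) : log x ≤ y := by
  rcases hx.eq_or_lt with rfl | hpos
  · rwa [log_zero]
  · exact (log_le_iff_le_exp hpos).mpr h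

lemma rpow_mul_rpow_one_sub {p q : ℝ} (hp : 0 ≤ p) (hq : 0 < q) (α : ℝ) :
    p ^ α * q ^ (1 - α) = q * (p / q) ^ α := by
  rw [div_rpow hp hq.le, rpow_sub hq, rpow_one]
  field_simp

end Real

lemma ConvexOn.le_chord {f : ℝ → ℝ} {a b x : ℝ} (hf : ConvexOn ℝ (Icc a b) f) (hab : a < b)
    (hx : x ∈ Icc a b) : f x ≤ ((b - x) * f a + (x - a) * f b) / (b - a) := by
  have hba : 0 < b - a := sub_pos.mpr hab
  have h := hf.2 (left_mem_Icc.mpr hab.le) (right_mem_Icc.mpr hab.le)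
    (div_nonneg (sub_nonneg.mpr hx.2) hba.le) (div_nonneg (sub_nonneg.mpr hx.1) hba.le)
    (by field_simp; ring)
  have hcomb : ((b - x) / (b - a)) • a + ((x - a) / (b - a)) • b = x := by
    simp only [smul_eq_mul]
    field_simp
    ring
  rw [hcomb] at h
  exact h.trans_eq (by simp only [smul_eq_mul]; field_simp)

lemma ConvexOn.sum_mul_le_chord {ι : Type*} (s : Finset ι) {f : ℝ → ℝ} {a b : ℝ}
    (hf : ConvexOn ℝ (Icc a b) f) (hab : a < b) {w r : ι → ℝ} (hw : ∀ i ∈ s, 0 ≤ w i)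
    (hw1 : ∑ i ∈ s, w i = 1) (hr : ∀ i ∈ s, r i ∈ Icc a b) :
    ∑ i ∈ s, w i * f (r i) ≤
      ((b - ∑ i ∈ s, w i * r i) * f a + (∑ i ∈ s, w i * r i - a) * f b) / (b - a) := by
  calc ∑ i ∈ s, w i * f (r i)
      ≤ ∑ i ∈ s, w i * (((b - r i) * f a + (r i - a) * f b) / (b - a)) :=
        sum_le_sum fun i hi => mul_le_mul_of_nonneg_left (hf.le_chord hab (hr i hi)) (hw i hi)
    _ = _ := by
        simp only [mul_div_assoc', ← sum_div, mul_add, sum_add_distrib, ← mul_assoc, ← sum_mul,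
          mul_sub, sum_sub_distrib, hw1]
        ring

lemma chord_rpow_exp_eq_cosh_div_cosh (α : ℝ) {ε : ℝ} (hε : ε ≠ 0) :
    ((exp ε - 1) * exp (-ε) ^ α + (1 - exp (-ε)) * exp ε ^ α) / (exp ε - exp (-ε)) =
      cosh (ε * (α - 1 / 2)) / cosh (ε / 2) := by
  have hsq : exp ε = exp (ε / 2) ^ 2 := by rw [sq, ← exp_add, add_halves]
  have hpow : exp ε ^ α = exp (ε / 2) * exp (ε * (α - 1 / 2)) := by
    rw [← exp_mul, ← exp_add]; ring_nf
  have hne : exp (ε / 2) ^ 2 - 1 ≠ 0 := by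
    rw [← hsq, sub_ne_zero, Ne, exp_eq_one_iff]
    exact hε
  rw [exp_neg, inv_rpow (exp_pos ε).le, hpow, hsq, cosh_eq, cosh_eq, exp_neg, exp_neg]
  have hu := exp_pos (ε / 2)
  have hv := exp_pos (ε * (α - 1 / 2))
  generalize exp (ε / 2) = u at *
  generalize exp (ε * (α - 1 / 2)) = v at *
  have hne' : u ^ 4 - 1 ≠ 0 := by
    rw [show u ^ 4 - 1 = (u ^ 2 - 1) * (u ^ 2 + 1) by ring]
    exact mul_ne_zero hne (by positivity)
  field_simp
  ring

lemma cosh_mul_sub_half_div_cosh_half_le {ε α : ℝ} (hε : 0 ≤ ε) (hα : 1 ≤ α) :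
    cosh (ε * (α - 1 / 2)) / cosh (ε / 2) ≤ exp ((α - 1) * ((1 / 2) * ε ^ 2 * α)) := by
  rw [div_le_iff₀' (cosh_pos _)]
  have hle : ε / 2 ≤ ε * (α - 1 / 2) := by nlinarith [mul_nonneg hε (sub_nonneg.mpr hα)]
  refine (cosh_le_cosh_mul_exp (by positivity) hle).trans_eq ?_
  ring_nf

theorem renyi_le_of_pure_dp {Ω : Type*} [Fintype Ω] (P Q : Ω → ℝ) (ε : ℝ) (hε : 0 < ε)
    (hP : ∀ x, 0 ≤ P x) (hQ : ∀ x, 0 < Q x)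
    (hPsum : ∑ x, P x = 1) (hQsum : ∑ x, Q x = 1)
    (hlo : ∀ x, Real.exp (-ε) ≤ P x / Q x) (hhi : ∀ x, P x / Q x ≤ Real.exp ε)
    (α : ℝ) (hα : 1 < α) :
    (1 / (α - 1)) * Real.log (∑ x, P x ^ α * Q x ^ (1 - α)) ≤ (1 / 2) * ε ^ 2 * α := by
  have hsum : ∑ x, P x ^ α * Q x ^ (1 - α) = ∑ x, Q x * (P x / Q x) ^ α :=
    sum_congr rfl fun x _ => rpow_mul_rpow_one_sub (hP x) (hQ x) α
  have hmean : ∑ x, Q x * (P x / Q x) = 1 := by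
    simp_rw [mul_div_cancel₀ _ (hQ _).ne', hPsum]
  have hconv : ConvexOn ℝ (Icc (exp (-ε)) (exp ε)) fun t => t ^ α :=
    (convexOn_rpow hα.le).subset (Icc_subset_Ici_self.trans (Ici_subset_Ici.mpr (exp_pos _).le))
      (convex_Icc _ _)
  have hchord := hconv.sum_mul_le_chord univ (exp_lt_exp.mpr (neg_lt_self hε))
    (fun x _ => (hQ x).le) hQsum fun x _ => ⟨hlo x, hhi x⟩
  rw [hmean, chord_rpow_exp_eq_cosh_div_cosh α hε.ne'] at hchord
  have hα' : 0 < α - 1 := sub_pos.mpr hα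
  rw [one_div_mul_eq_div, div_le_iff₀' hα']
  refine log_le_of_le_exp (sum_nonneg fun x _ => ?_) (mul_nonneg hα'.le (by positivity)) ?_
  · exact mul_nonneg (rpow_nonneg (hP x) α) (rpow_nonneg (hQ x).le _)
  · rw [hsum]
    exact hchord.trans (cosh_mul_sub_half_div_cosh_half_le hε.le hα.le)
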